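/- There exists a deterministic apple tasting learner making at most AL_1(H) mistakes in the realizable setting: the learner maintains the version space V_t, predicts 1 if some h ∈ V_t has h(x_t) = 1 and 0 otherwise, and updates V_t only when it predicts 1; this learner makes at most AL_1(H) mistakes on any realizable stream. -/

import Mathlib

/-- `ALShatter H w d` : the hypothesis class `H` shatters some Apple Littlestone tree of
width `w` and depth `d`. Width `0` means the path has already ended (took the maximal
number of right/1 edges), in which case shattering only requires a consistent hypothesis. -/
def ALShatter {X : Type*} : Set (X → Bool) → ℕ → ℕ → Prop
  | H, _, 0 => H.Nonempty
  | H, 0, _ + 1 => H.Nonempty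
  | H, w + 1, d + 1 =>
      ∃ x : X, ALShatter {h | h ∈ H ∧ h x = false} (w + 1) d ∧
               ALShatter {h | h ∈ H ∧ h x = true} w d

/-- The Apple Littlestone dimension of `H` at width `w`. -/
noncomputable def ALdim {X : Type*} (H : Set (X → Bool)) (w : ℕ) : ℕ∞ :=
  sSup {d : ℕ∞ | ∃ n : ℕ, ALShatter H w n ∧ d = (n : ℕ∞)}

/-- `LShatter H d` : `H` shatters some Littlestone tree of depth `d`. -/
def LShatter {X : Type*} : Set (X → Bool) → ℕ → Prop
  | H, 0 => H.Nonempty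
  | H, d + 1 =>
      ∃ x : X, LShatter {h | h ∈ H ∧ h x = false} d ∧
               LShatter {h | h ∈ H ∧ h x = true} d

/-- The Littlestone dimension of `H`. -/
noncomputable def Ldim {X : Type*} (H : Set (X → Bool)) : ℕ∞ :=
  sSup {d : ℕ∞ | ∃ n : ℕ, LShatter H n ∧ d = (n : ℕ∞)}

/-- The Effective width of `H`: the least width `w ≥ 1` at which the
Apple Littlestone dimension is finite. -/
noncomputable def EffW {X : Type*} (H : Set (X → Bool)) : ℕ∞ :=
  sInf {w : ℕ∞ | ∃ n : ℕ, 1 ≤ n ∧ ALdim H n ≠ ⊤ ∧ w = (n : ℕ∞)}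

open Classical in
/-- The version space maintained by the deterministic apple-tasting learner: predict 1
iff some hypothesis in the current version space labels the instance with 1, and update
the version space (using the observed label) only on rounds where 1 was predicted. -/
noncomputable def VSpace {X : Type*} (H : Set (X → Bool)) (x : ℕ → X) (y : ℕ → Bool) :
    ℕ → Set (X → Bool)
  | 0 => H
  | t + 1 =>
      let V := VSpace H x y t
      if ∃ h ∈ V, h (x t) = true then {h | h ∈ V ∧ h (x t) = y t} else V


/-!
Along a stream labelled by some `h ∈ H`, the target `h` never leaves the version space, so the
learner predicts 1 whenever the label is 1: every mistake is a false positive. On a false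
positive at `x t` the version space shrinks to `{g ∈ V_t | g (x t) = false}` while some
`g ∈ V_t` has `g (x t) = true`; hence a width-1 tree shattered by `V_{t+1}` extends, with root
`x t`, to a one level deeper tree shattered by `V_t`. Chaining this over the false positives
before `T`, starting from the depth-0 tree of the nonempty `V_T`, gives a width-1 tree of that
depth shattered by `H`.
-/

section AppleTasting

variable {X : Type*}

theorem ALShatter.mono {H H' : Set (X → Bool)} (hHH' : H ⊆ H') :
    ∀ {w d : ℕ}, ALShatter H w d → ALShatter H' w d
  | _, 0, hH => Set.Nonempty.mono hHH' hH
  | 0, _ + 1, hH => Set.Nonempty.mono hHH' hH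
  | _ + 1, _ + 1, ⟨x, h₀, h₁⟩ =>
    have hsep (b : Bool) : {g | g ∈ H ∧ g x = b} ⊆ {g | g ∈ H' ∧ g x = b} :=
      fun _ hg => ⟨hHH' hg.1, hg.2⟩
    ⟨x, ALShatter.mono (hsep false) h₀, ALShatter.mono (hsep true) h₁⟩

theorem ALShatter.width_zero {H : Set (X → Bool)} (hH : H.Nonempty) : ∀ d, ALShatter H 0 d
  | 0 => hH
  | _ + 1 => hH

theorem ALShatter.width_one_succ {H : Set (X → Bool)} {x : X} {d : ℕ}
    (hpos : ∃ g ∈ H, g x = true) (hneg : ALShatter {g | g ∈ H ∧ g x = false} 1 d) :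
    ALShatter H 1 (d + 1) :=
  ⟨x, hneg, ALShatter.width_zero hpos d⟩

theorem le_ALdim {H : Set (X → Bool)} {w n : ℕ} (hH : ALShatter H w n) :
    (n : ℕ∞) ≤ ALdim H w :=
  le_sSup ⟨n, hH, rfl⟩

section VSpace

variable {H : Set (X → Bool)} {x : ℕ → X} {y : ℕ → Bool}

theorem VSpace_succ_subset (t : ℕ) : VSpace H x y (t + 1) ⊆ VSpace H x y t := by
  rw [VSpace]
  split_ifs
  exacts [fun _ hg => hg.1, subset_rfl]

theorem VSpace_succ_of_predict {t : ℕ} (hpred : ∃ g ∈ VSpace H x y t, g (x t) = true) :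
    VSpace H x y (t + 1) = {g | g ∈ VSpace H x y t ∧ g (x t) = y t} := by
  rw [VSpace, if_pos hpred]

theorem mem_VSpace {h : X → Bool} (hH : h ∈ H) (hy : ∀ s, y s = h (x s)) :
    ∀ t, h ∈ VSpace H x y t
  | 0 => hH
  | t + 1 => by
    rw [VSpace]
    split_ifs
    exacts [⟨mem_VSpace hH hy t, (hy t).symm⟩, mem_VSpace hH hy t]

open Classical in
theorem ALShatter_of_VSpace (T : ℕ) {d : ℕ} (hV : ALShatter (VSpace H x y T) 1 d) :
    ALShatter H 1 (d + ((Finset.range T).filter fun t =>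
      (∃ g ∈ VSpace H x y t, g (x t) = true) ∧ y t = false).card) := by
  induction T generalizing d with
  | zero => simpa [VSpace] using hV
  | succ T ih =>
    rw [Finset.range_add_one, Finset.filter_insert]
    split_ifs with hfp
    · obtain ⟨hpred, hyT⟩ := hfp
      have hstep : ALShatter (VSpace H x y T) 1 (d + 1) := by
        refine ALShatter.width_one_succ hpred ?_
        rwa [← hyT, ← VSpace_succ_of_predict hpred]
      rw [Finset.card_insert_of_notMem (by simp), ← add_assoc, add_right_comm]
      exact ih hstep
    · exact ih (hV.mono (VSpace_succ_subset T))

end VSpace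

theorem mistake_iff_false_positive {H : Set (X → Bool)} {h : X → Bool} (hH : h ∈ H)
    (x : ℕ → X) (t : ℕ) :
    ¬ ((∃ g ∈ VSpace H x (fun s => h (x s)) t, g (x t) = true) ↔ h (x t) = true) ↔
      (∃ g ∈ VSpace H x (fun s => h (x s)) t, g (x t) = true) ∧ h (x t) = false := by
  have hV := mem_VSpace (x := x) hH (fun _ => rfl) t
  cases hht : h (x t)
  · simp
  · simpa using ⟨h, hV, hht⟩

end AppleTasting

open Classical in
/-- the deterministic apple-tasting learner that predicts 1 iff some
hypothesis in its version space labels the current instance 1 (updating the version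
space only upon predicting 1) makes at most AL_1(H) mistakes on any realizable stream. -/
theorem vspace_learner_mistake_bound {X : Type*} (H : Set (X → Bool)) :
    ∀ h ∈ H, ∀ x : ℕ → X, ∀ T : ℕ,
      ((((Finset.range T).filter fun t =>
          ¬ ((∃ g ∈ VSpace H x (fun s => h (x s)) t, g (x t) = true) ↔
              h (x t) = true)).card : ℕ∞))
        ≤ ALdim H 1 := by
  intro h hH x T
  have hVT : ALShatter (VSpace H x (fun s => h (x s)) T) 1 0 :=
    ⟨h, mem_VSpace (x := x) hH (fun _ => rfl) T⟩
  have hshatter := ALShatter_of_VSpace T hVT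
  rw [zero_add, ← Finset.filter_congr fun t _ => mistake_iff_false_positive hH x t] at hshatter
  exact le_ALdim hshatter
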